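/- arXiv:2002.08686 — 4 statements merged into one kernel-verified Lean document; each statement's English description precedes it below -/
import Mathlib

section
/- For every n ≥ 2 and every 0 ≤ t ≤ n−1, the free-group homomorphism S_t : F_n → F_{n+1} maps the relator set R^V(n) into the normal closure of R^V(n+1) in F_{n+1}; consequently S_t induces a well-defined group homomorphism s_t : VP_n → VP_{n+1} which acts on the generators λ_{k,l}, λ_{l,k} of VP_n by the displayed case formulas (this is the algebraic description of the degeneracy homomorphism given by doubling the (t+1)-st strand). -/
/-- The ambient free group with generators `λ i j` indexed by ordered pairs of naturals;
the sub-free-group `F_m` is spanned by the generators `lam i j` with `1 ≤ i ≠ j ≤ m`,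
and the canonical inclusion `F_m → F_{m'}` is the identity on generators. -/
abbrev FG : Type := FreeGroup (ℕ × ℕ)

/-- The generator `λ_{i,j}`. -/
def lam (i j : ℕ) : FG := FreeGroup.of (i, j)

/-- The commutativity relators `λ_{i,j} λ_{k,l} λ_{i,j}⁻¹ λ_{k,l}⁻¹` of `VP_m`,
for pairwise distinct indices `1 ≤ i, j, k, l ≤ m`. -/
def CR (m : ℕ) : Set FG :=
  {w | ∃ i j k l : ℕ,
    1 ≤ i ∧ i ≤ m ∧ 1 ≤ j ∧ j ≤ m ∧ 1 ≤ k ∧ k ≤ m ∧ 1 ≤ l ∧ l ≤ m ∧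
    i ≠ j ∧ i ≠ k ∧ i ≠ l ∧ j ≠ k ∧ j ≠ l ∧ k ≠ l ∧
    w = lam i j * lam k l * (lam i j)⁻¹ * (lam k l)⁻¹}

/-- The long relators `λ_{k,i} λ_{k,j} λ_{i,j} λ_{k,i}⁻¹ λ_{k,j}⁻¹ λ_{i,j}⁻¹` of `VP_m`,
for pairwise distinct indices `1 ≤ i, j, k ≤ m`. -/
def LongR (m : ℕ) : Set FG :=
  {w | ∃ i j k : ℕ,
    1 ≤ i ∧ i ≤ m ∧ 1 ≤ j ∧ j ≤ m ∧ 1 ≤ k ∧ k ≤ m ∧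
    i ≠ j ∧ i ≠ k ∧ j ≠ k ∧
    w = lam k i * lam k j * lam i j * (lam k i)⁻¹ * (lam k j)⁻¹ * (lam i j)⁻¹}

/-- The full relator set `R^V(m)` of the virtual pure braid group `VP_m`. -/
def RV (m : ℕ) : Set FG := CR m ∪ LongR m

/-- Value of `S_{i-1}` on a generator, given by the displayed case formulas:
for `k < l`, `S_{i-1}(λ_{k,l})` and `S_{i-1}(λ_{l,k})` according to the position of `i`
relative to `k` and `l`. -/
def Sgen (i : ℕ) (p : ℕ × ℕ) : FG :=
  if p.1 < p.2 then
    -- the generator is `λ_{k,l}` with `k = p.1 < l = p.2`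
    if i < p.1 then lam (p.1 + 1) (p.2 + 1)
    else if i = p.1 then lam p.1 (p.2 + 1) * lam (p.1 + 1) (p.2 + 1)
    else if i < p.2 then lam p.1 (p.2 + 1)
    else if i = p.2 then lam p.1 (p.2 + 1) * lam p.1 p.2
    else lam p.1 p.2
  else if p.2 < p.1 then
    -- the generator is `λ_{l,k}` with `k = p.2 < l = p.1`
    if i < p.2 then lam (p.1 + 1) (p.2 + 1)
    else if i = p.2 then lam (p.1 + 1) (p.2 + 1) * lam (p.1 + 1) p.2
    else if i < p.1 then lam (p.1 + 1) p.2
    else if i = p.1 then lam p.1 p.2 * lam (p.1 + 1) p.2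
    else lam p.1 p.2
  else lam p.1 p.2

/-- The free-group homomorphism `S_t = S_{(t+1)-1} : F_m → F_{m+1}` (doubling the
`(t+1)`-st strand), determined on generators by the displayed case formulas. -/
def Smap (t : ℕ) : FG →* FG := FreeGroup.lift (Sgen (t + 1))

/-- The relator `u * v⁻¹` of a relation `u = v`. -/
def relOf (u v : FG) : FG := u * v⁻¹

/-- The set `R_{i,j,k}` of the six long relators with indices in `{i, j, k}`. -/
def Rtriple (i j k : ℕ) : Set FG :=
  {relOf (lam i j * lam i k * lam j k) (lam j k * lam i k * lam i j),
   relOf (lam j i * lam j k * lam i k) (lam i k * lam j k * lam j i),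
   relOf (lam i k * lam i j * lam k j) (lam k j * lam i j * lam i k),
   relOf (lam k i * lam k j * lam i j) (lam i j * lam k j * lam k i),
   relOf (lam j k * lam j i * lam k i) (lam k i * lam j i * lam j k),
   relOf (lam k j * lam k i * lam j i) (lam j i * lam k i * lam k j)}

/-- The commutator `[a,b] = a⁻¹ b⁻¹ a b`. -/
def commE (a b : FG) : FG := a⁻¹ * b⁻¹ * a * b

/-- The automorphism of the free group induced by a permutation of the indices:
`λ_{i,j} ↦ λ_{σ(i),σ(j)}`. -/
def permF (σ : Equiv.Perm ℕ) : FG →* FG :=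
  FreeGroup.lift (fun p => lam (σ p.1) (σ p.2))

/-!
Doubling the strand `s` replaces a generator with an index equal to `s` by a product of two
generators, one with index `s` and one with index `s + 1`, and shifts the indices above `s`
up by one. A commutativity relator involves four distinct indices, so it is sent to a
commutator of products of generators whose index pairs are pairwise disjoint, which is trivial
in `VP_{n+1}`. A long relator `x y z = z y x` involving the strand `s` has two of `x, y, z`
doubled, and its image follows from two long relations of `VP_{n+1}` (one on the strand `s`,
one on the strand `s + 1`) together with two commutativity relations.
-/

section LongRel

variable {G : Type*} [Group G]

def LongRel (x y z : G) : Prop := x * y * z = z * y * x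

theorem LongRel.eq {x y z : G} (h : LongRel x y z) : x * y * z = z * y * x := h

theorem longRel_iff {x y z : G} : LongRel x y z ↔ x * y * z * x⁻¹ * y⁻¹ * z⁻¹ = 1 := by
  rw [LongRel, mul_inv_eq_one, mul_inv_eq_iff_eq_mul, mul_inv_eq_iff_eq_mul]

theorem LongRel.mul_left_mul_right {x x' y z z' : G} (hx'z : Commute x z) (hxz' : Commute x' z')
    (h : LongRel x' y z) (h' : LongRel x y z') : LongRel (x * x') y (z * z') :=
  calc x * x' * y * (z * z') = x * (x' * y * z) * z' := by group
  _ = x * (z * y * x') * z' := by rw [h.eq]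
  _ = (x * z) * (y * (x' * z')) := by group
  _ = (z * x) * (y * (z' * x')) := by rw [hx'z.eq, hxz'.eq]
  _ = z * (x * y * z') * x' := by group
  _ = z * (z' * y * x) * x' := by rw [h'.eq]
  _ = z * z' * y * (x * x') := by group

theorem LongRel.mul_mid_mul_right {x y y' z z' : G} (hy'z : Commute y' z) (hyz' : Commute y z')
    (h : LongRel x y z) (h' : LongRel x y' z') : LongRel x (y * y') (z * z') :=
  calc x * (y * y') * (z * z') = x * y * (y' * z) * z' := by group
  _ = x * y * (z * y') * z' := by rw [hy'z.eq]
  _ = (x * y * z) * (y' * z') := by group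
  _ = (z * y * x) * (y' * z') := by rw [h.eq]
  _ = z * y * (x * y' * z') := by group
  _ = z * y * (z' * y' * x) := by rw [h'.eq]
  _ = z * (y * z') * (y' * x) := by group
  _ = z * (z' * y) * (y' * x) := by rw [hyz'.eq]
  _ = z * z' * (y * y') * x := by group

theorem LongRel.mul_left_mul_mid {x x' y y' z : G} (hx'y : Commute x' y) (hxy' : Commute x y')
    (h : LongRel x y z) (h' : LongRel x' y' z) : LongRel (x * x') (y * y') z :=
  calc x * x' * (y * y') * z = x * (x' * y) * (y' * z) := by group
  _ = x * (y * x') * (y' * z) := by rw [hx'y.eq]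
  _ = (x * y) * (x' * y' * z) := by group
  _ = (x * y) * (z * y' * x') := by rw [h'.eq]
  _ = (x * y * z) * (y' * x') := by group
  _ = (z * y * x) * (y' * x') := by rw [h.eq]
  _ = z * y * (x * y') * x' := by group
  _ = z * y * (y' * x) * x' := by rw [hxy'.eq]
  _ = z * (y * y') * (x * x') := by group

end LongRel

abbrev toVP (m : ℕ) : FG →* FG ⧸ Subgroup.normalClosure (RV m) := QuotientGroup.mk' _

section Relations

variable {m a b c d : ℕ}

theorem commute_toVP_lam (ha1 : 1 ≤ a) (ha2 : a ≤ m) (hb1 : 1 ≤ b) (hb2 : b ≤ m)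
    (hc1 : 1 ≤ c) (hc2 : c ≤ m) (hd1 : 1 ≤ d) (hd2 : d ≤ m)
    (hab : a ≠ b) (hac : a ≠ c) (had : a ≠ d) (hbc : b ≠ c) (hbd : b ≠ d)
    (hcd : c ≠ d) :
    Commute (toVP m (lam a b)) (toVP m (lam c d)) := by
  rw [← commutatorElement_eq_one_iff_commute, ← map_commutatorElement,
    commutatorElement_def, QuotientGroup.mk'_apply, QuotientGroup.eq_one_iff]
  exact Subgroup.subset_normalClosure <| Or.inl
    ⟨a, b, c, d, ha1, ha2, hb1, hb2, hc1, hc2, hd1, hd2, hab, hac, had, hbc, hbd, hcd, rfl⟩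

theorem longRel_toVP_lam (ha1 : 1 ≤ a) (ha2 : a ≤ m) (hb1 : 1 ≤ b) (hb2 : b ≤ m)
    (hc1 : 1 ≤ c) (hc2 : c ≤ m) (hab : a ≠ b) (hac : a ≠ c) (hbc : b ≠ c) :
    LongRel (toVP m (lam c a)) (toVP m (lam c b)) (toVP m (lam a b)) := by
  rw [longRel_iff]
  simp only [← map_inv, ← map_mul]
  rw [QuotientGroup.mk'_apply, QuotientGroup.eq_one_iff]
  exact Subgroup.subset_normalClosure <| Or.inr
    ⟨a, b, c, ha1, ha2, hb1, hb2, hc1, hc2, hab, hac, hbc, rfl⟩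

end Relations

/-- The index of a strand other than `s` after the strand `s` is doubled. -/
def shiftAbove (s x : ℕ) : ℕ := if s < x then x + 1 else x

theorem shiftAbove_cases (s x : ℕ) :
    (s < x ∧ shiftAbove s x = x + 1) ∨ (x ≤ s ∧ shiftAbove s x = x) := by
  unfold shiftAbove
  split_ifs with h
  · exact Or.inl ⟨h, rfl⟩
  · exact Or.inr ⟨by omega, rfl⟩

section Sgen

variable {s a b : ℕ}

theorem Sgen_of_ne (ha : a ≠ s) (hb : b ≠ s) (hab : a ≠ b) :
    Sgen s (a, b) = lam (shiftAbove s a) (shiftAbove s b) := by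
  simp only [Sgen, shiftAbove]
  split_ifs <;> first | rfl | omega

theorem Sgen_left (hb : b ≠ s) :
    Sgen s (s, b) = lam s (shiftAbove s b) * lam (s + 1) (shiftAbove s b) := by
  simp only [Sgen, shiftAbove]
  split_ifs <;> first | rfl | omega

theorem Sgen_right (ha : a ≠ s) :
    Sgen s (a, s) = lam (shiftAbove s a) (s + 1) * lam (shiftAbove s a) s := by
  simp only [Sgen, shiftAbove]
  split_ifs <;> first | rfl | omega

end Sgen

theorem Smap_lam (t i j : ℕ) : Smap t (lam i j) = Sgen (t + 1) (i, j) :=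
  FreeGroup.lift_apply_of

section Doubling

variable {n s i j k l : ℕ}

theorem commute_toVP_Sgen (hi1 : 1 ≤ i) (hi2 : i ≤ n) (hj1 : 1 ≤ j) (hj2 : j ≤ n)
    (hk1 : 1 ≤ k) (hk2 : k ≤ n) (hl1 : 1 ≤ l) (hl2 : l ≤ n)
    (hij : i ≠ j) (hik : i ≠ k) (hil : i ≠ l) (hjk : j ≠ k) (hjl : j ≠ l)
    (hkl : k ≠ l) :
    Commute (toVP (n + 1) (Sgen s (i, j))) (toVP (n + 1) (Sgen s (k, l))) := by
  have := shiftAbove_cases s i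
  have := shiftAbove_cases s j
  have := shiftAbove_cases s k
  have := shiftAbove_cases s l
  by_cases hsi : s = i
  · rw [← hsi, Sgen_left (by omega), Sgen_of_ne (by omega) (by omega) hkl, map_mul]
    apply Commute.mul_left <;> apply commute_toVP_lam <;> omega
  by_cases hsj : s = j
  · rw [← hsj, Sgen_right (by omega), Sgen_of_ne (by omega) (by omega) hkl, map_mul]
    apply Commute.mul_left <;> apply commute_toVP_lam <;> omega
  by_cases hsk : s = k
  · rw [← hsk, Sgen_left (by omega), Sgen_of_ne (by omega) (by omega) hij, map_mul]
    apply Commute.mul_right <;> apply commute_toVP_lam <;> omega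
  by_cases hsl : s = l
  · rw [← hsl, Sgen_right (by omega), Sgen_of_ne (by omega) (by omega) hij, map_mul]
    apply Commute.mul_right <;> apply commute_toVP_lam <;> omega
  rw [Sgen_of_ne (by omega) (by omega) hij, Sgen_of_ne (by omega) (by omega) hkl]
  apply commute_toVP_lam <;> omega

theorem longRel_toVP_Sgen (hi1 : 1 ≤ i) (hi2 : i ≤ n) (hj1 : 1 ≤ j) (hj2 : j ≤ n)
    (hk1 : 1 ≤ k) (hk2 : k ≤ n) (hij : i ≠ j) (hik : i ≠ k) (hjk : j ≠ k) :
    LongRel (toVP (n + 1) (Sgen s (k, i))) (toVP (n + 1) (Sgen s (k, j)))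
      (toVP (n + 1) (Sgen s (i, j))) := by
  have := shiftAbove_cases s i
  have := shiftAbove_cases s j
  have := shiftAbove_cases s k
  by_cases hsi : s = i
  · rw [← hsi, Sgen_right (by omega), Sgen_of_ne (by omega) (by omega) hjk.symm,
      Sgen_left (by omega), map_mul, map_mul]
    apply LongRel.mul_left_mul_right <;>
      first | apply commute_toVP_lam <;> omega | apply longRel_toVP_lam <;> omega
  by_cases hsj : s = j
  · rw [← hsj, Sgen_of_ne (by omega) (by omega) hik.symm, Sgen_right (by omega),
      Sgen_right (by omega), map_mul, map_mul]
    apply LongRel.mul_mid_mul_right <;>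
      first | apply commute_toVP_lam <;> omega | apply longRel_toVP_lam <;> omega
  by_cases hsk : s = k
  · rw [← hsk, Sgen_left (by omega), Sgen_left (by omega),
      Sgen_of_ne (by omega) (by omega) hij, map_mul, map_mul]
    apply LongRel.mul_left_mul_mid <;>
      first | apply commute_toVP_lam <;> omega | apply longRel_toVP_lam <;> omega
  rw [Sgen_of_ne (by omega) (by omega) hik.symm, Sgen_of_ne (by omega) (by omega) hjk.symm,
    Sgen_of_ne (by omega) (by omega) hij]
  apply longRel_toVP_lam <;> omega

end Doubling

theorem Smap_image_RV_subset (n t : ℕ) :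
    Smap t '' RV n ⊆ Subgroup.normalClosure (RV (n + 1)) := by
  rintro _ ⟨w, hw, rfl⟩
  rw [SetLike.mem_coe, ← QuotientGroup.eq_one_iff, ← QuotientGroup.mk'_apply]
  rcases hw with
    ⟨i, j, k, l, hi1, hi2, hj1, hj2, hk1, hk2, hl1, hl2, hij, hik, hil, hjk, hjl, hkl, rfl⟩ |
    ⟨i, j, k, hi1, hi2, hj1, hj2, hk1, hk2, hij, hik, hjk, rfl⟩
  · rw [← commutatorElement_def, map_commutatorElement, map_commutatorElement,
      Smap_lam, Smap_lam, commutatorElement_eq_one_iff_commute]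
    exact commute_toVP_Sgen hi1 hi2 hj1 hj2 hk1 hk2 hl1 hl2 hij hik hil hjk hjl hkl
  · simp only [map_mul, map_inv, Smap_lam, ← longRel_iff]
    exact longRel_toVP_Sgen hi1 hi2 hj1 hj2 hk1 hk2 hij hik hjk

theorem degeneracy_well_defined_general (n t : ℕ) :
    (Smap t) '' (RV n) ⊆ (Subgroup.normalClosure (RV (n + 1)) : Set FG) ∧
    ∃ φ : FG ⧸ Subgroup.normalClosure (RV n) →* FG ⧸ Subgroup.normalClosure (RV (n + 1)),
      ∀ w : FG,
        φ (QuotientGroup.mk' (Subgroup.normalClosure (RV n)) w)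
          = QuotientGroup.mk' (Subgroup.normalClosure (RV (n + 1))) (Smap t w) := by
  have hle :
      Subgroup.normalClosure (RV n) ≤ (Subgroup.normalClosure (RV (n + 1))).comap (Smap t) :=
    Subgroup.normalClosure_le_normal fun w hw => Smap_image_RV_subset n t ⟨w, hw, rfl⟩
  exact ⟨Smap_image_RV_subset n t, QuotientGroup.map _ _ _ hle, QuotientGroup.map_mk' _ _ _ hle⟩

/-- For every `n ≥ 2` and `0 ≤ t ≤ n-1`, the free-group homomorphism
`S_t : F_n → F_{n+1}` maps the relator set `R^V(n)` into the normal closure of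
`R^V(n+1)`; consequently `S_t` induces a well-defined degeneracy homomorphism
`s_t : VP_n → VP_{n+1}`, acting on the generators `λ_{k,l}, λ_{l,k}` by the
displayed case formulas (built into `Sgen`/`Smap`). -/
theorem degeneracy_well_defined (n t : ℕ) (hn : 2 ≤ n) (ht : t ≤ n - 1) :
    (Smap t) '' (RV n) ⊆ (Subgroup.normalClosure (RV (n + 1)) : Set FG) ∧
    ∃ φ : FG ⧸ Subgroup.normalClosure (RV n) →* FG ⧸ Subgroup.normalClosure (RV (n + 1)),
      ∀ w : FG,
        φ (QuotientGroup.mk' (Subgroup.normalClosure (RV n)) w)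
          = QuotientGroup.mk' (Subgroup.normalClosure (RV (n + 1))) (Smap t w) :=
  degeneracy_well_defined_general n t
end

section
/- Lifting theorem: for every n ≥ 4, the following two subsets of F_{n+1} have the same normal closure: (a) R^V(n) ∪ ⋃_{i=0}^{n−1} S_i(R^V(n)), where R^V(n) is viewed inside F_{n+1} via the canonical inclusion F_n → F_{n+1}; and (b) R^V(n+1). Hence, regarding VP_n as a subgroup of VP_{n+1} by adding a trivial strand at the end, R^V(n) ∪ ⋃_{i=0}^{n−1} s_i(R^V(n)) is a full set of defining relations for VP_{n+1}. -/
/-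
A relator vanishes under a homomorphism `φ : F → H` exactly when the elements
`z i j = φ λ_{i,j}` satisfy the corresponding relation, and `φ ∘ S_{m-1}` sends `λ_{x,y}` to
`doubleStrand z m x y`. Both inclusions of normal closures are therefore statements about the
elements `z i j` of an arbitrary group.

The relators `S_i(R^V(n))` vanish in `VP_{n+1}`: a doubled commutation relation is a product of two
commutation relations, and a doubled long relation follows from two long relations and two
commutation relations.

Conversely, the relations of `VP_{n+1}` not involving the new strand `n + 1` are those of
`R^V(n)`. The others are read off the doubled relations at the strands `n, n - 1, n - 2, n - 3`
and `1` (this is where `n ≥ 4` enters): a doubled relation is a relation between products of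
generators, and once all but one of the relations between the factors are known it yields the
last one. This gives first most commutation relations, then the long relations, and finally the
commutation relations among strands `a < n - 1, n - 1, n, n + 1` that need the long relations.
The anti-automorphism `λ_{i,j} ↦ λ_{j,i}` preserves all these relations and halves the case
analysis.
-/

universe u

theorem Subgroup.normalClosure_le_normalClosure_of_forall {G : Type u} [Group G] {A B : Set G}
    (h : ∀ (H : Type u) [Group H] (φ : G →* H), (∀ b ∈ B, φ b = 1) → ∀ a ∈ A, φ a = 1) :
    Subgroup.normalClosure A ≤ Subgroup.normalClosure B := by
  refine Subgroup.normalClosure_le_normal fun a ha => ?_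
  rw [SetLike.mem_coe, ← QuotientGroup.eq_one_iff]
  exact h _ (QuotientGroup.mk' _)
    (fun b hb => (QuotientGroup.eq_one_iff b).mpr (Subgroup.subset_normalClosure hb)) a ha

namespace VirtualPureBraid

open MulOpposite

section Algebra

variable {G : Type*} [Group G] {a b c a₁ a₂ b₁ b₂ c₁ c₂ : G}

def YangBaxter (a b c : G) : Prop := a * b * c = c * b * a

theorem YangBaxter.symm (h : YangBaxter a b c) : YangBaxter c b a := Eq.symm h

theorem yangBaxter_op_iff : YangBaxter (op a) (op b) (op c) ↔ YangBaxter a b c := by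
  simp only [YangBaxter, ← op_mul, op_inj, mul_assoc]
  exact eq_comm

theorem mul_mul_mul_inv_mul_inv_mul_inv_eq_one_iff :
    a * b * c * a⁻¹ * b⁻¹ * c⁻¹ = 1 ↔ YangBaxter a b c := by
  rw [YangBaxter, ← mul_inv_eq_one (a := a * b * c)]
  simp only [mul_inv_rev, mul_assoc]

theorem _root_.Commute.left_of_mul_left (h : Commute (a * b) c) (hb : Commute b c) :
    Commute a c := by
  simpa using h.mul_left hb.inv_left

theorem _root_.Commute.right_of_mul_left (h : Commute (a * b) c) (ha : Commute a c) :
    Commute b c := by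
  simpa using ha.inv_left.mul_left h

/- Doubling the strand `l`, `i` or `j` of a long relation `(l; i, j)` produces one of the
following three shapes. Given the relation between the first factors and two commutations, each
is equivalent to the relation between the second factors; given the relations between the first
and between the second factors and one commutation, it implies the other commutation. -/
theorem YangBaxter.mul_mul_left_iff (h₁ : YangBaxter a₁ b₁ c) (ha : Commute a₁ b₂)
    (hb : Commute a₂ b₁) : YangBaxter (a₁ * a₂) (b₁ * b₂) c ↔ YangBaxter a₂ b₂ c := by
  have lhs : a₁ * a₂ * (b₁ * b₂) * c = a₁ * b₁ * (a₂ * b₂ * c) := by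
    simp only [mul_assoc, hb.left_comm]
  have rhs : c * (b₁ * b₂) * (a₁ * a₂) = a₁ * b₁ * (c * b₂ * a₂) := calc
    _ = c * b₁ * a₁ * (b₂ * a₂) := by simp only [mul_assoc, ha.symm.left_comm]
    _ = _ := by rw [← h₁]; simp only [mul_assoc]
  rw [YangBaxter, lhs, rhs, mul_right_inj]; rfl

theorem YangBaxter.commute_of_mul_mul_left (h : YangBaxter (a₁ * a₂) (b₁ * b₂) c)
    (h₁ : YangBaxter a₁ b₁ c) (h₂ : YangBaxter a₂ b₂ c) (ha : Commute a₁ b₂) :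
    Commute a₂ b₁ := by
  have lhs : a₁ * a₂ * (b₁ * b₂) * c = a₁ * (a₂ * b₁) * (b₂ * c) := by
    simp only [mul_assoc]
  have rhs : c * (b₁ * b₂) * (a₁ * a₂) = a₁ * (b₁ * a₂) * (b₂ * c) := calc
    _ = c * b₁ * a₁ * (b₂ * a₂) := by simp only [mul_assoc, ha.symm.left_comm]
    _ = a₁ * b₁ * (c * b₂ * a₂) := by rw [← h₁]; simp only [mul_assoc]
    _ = _ := by rw [← h₂]; simp only [mul_assoc]
  rw [YangBaxter, lhs, rhs, mul_left_inj, mul_right_inj] at h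
  exact h

theorem YangBaxter.mul_left_mul_right_iff (h₁ : YangBaxter a₁ b c₁) (hc : Commute a₁ c₂)
    (hc' : Commute a₂ c₁) : YangBaxter (a₂ * a₁) b (c₁ * c₂) ↔ YangBaxter a₂ b c₂ := by
  have lhs : a₂ * a₁ * b * (c₁ * c₂) = c₁ * (a₂ * b * c₂) * a₁ := calc
    _ = a₂ * (a₁ * b * c₁) * c₂ := by simp only [mul_assoc]
    _ = _ := by rw [h₁]; simp only [mul_assoc, hc'.left_comm, hc.eq]
  have rhs : c₁ * c₂ * b * (a₂ * a₁) = c₁ * (c₂ * b * a₂) * a₁ := by simp only [mul_assoc]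
  rw [YangBaxter, lhs, rhs, mul_left_inj, mul_right_inj]; rfl

theorem YangBaxter.commute_of_mul_left_mul_right (h : YangBaxter (a₂ * a₁) b (c₁ * c₂))
    (h₁ : YangBaxter a₁ b c₁) (h₂ : YangBaxter a₂ b c₂) (hc : Commute a₁ c₂) :
    Commute a₂ c₁ := by
  have lhs : a₂ * a₁ * b * (c₁ * c₂) = a₂ * c₁ * (b * c₂ * a₁) := calc
    _ = a₂ * (a₁ * b * c₁) * c₂ := by simp only [mul_assoc]
    _ = _ := by rw [h₁]; simp only [mul_assoc, hc.eq]
  have rhs : c₁ * c₂ * b * (a₂ * a₁) = c₁ * a₂ * (b * c₂ * a₁) := calc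
    _ = c₁ * (c₂ * b * a₂) * a₁ := by simp only [mul_assoc]
    _ = _ := by rw [← h₂]; simp only [mul_assoc]
  rw [YangBaxter, lhs, rhs, mul_left_inj] at h
  exact h

theorem YangBaxter.mul_mul_right_iff (h₁ : YangBaxter a b₁ c₁) (hb : Commute b₁ c₂)
    (hb' : Commute b₂ c₁) : YangBaxter a (b₂ * b₁) (c₂ * c₁) ↔ YangBaxter a b₂ c₂ := by
  have lhs : a * (b₂ * b₁) * (c₂ * c₁) = a * b₂ * c₂ * (b₁ * c₁) := by
    simp only [mul_assoc, hb.left_comm]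
  have rhs : c₂ * c₁ * (b₂ * b₁) * a = c₂ * b₂ * a * (b₁ * c₁) := calc
    _ = c₂ * b₂ * (c₁ * b₁ * a) := by simp only [mul_assoc, hb'.symm.left_comm]
    _ = _ := by rw [← h₁]; simp only [mul_assoc]
  rw [YangBaxter, lhs, rhs, mul_left_inj]; rfl

theorem YangBaxter.commute_of_mul_mul_right (h : YangBaxter a (b₂ * b₁) (c₂ * c₁))
    (h₁ : YangBaxter a b₁ c₁) (h₂ : YangBaxter a b₂ c₂) (hb : Commute b₁ c₂) :
    Commute b₂ c₁ := by
  have lhs : a * (b₂ * b₁) * (c₂ * c₁) = c₂ * (b₂ * c₁) * (b₁ * a) := calc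
    _ = a * b₂ * c₂ * (b₁ * c₁) := by simp only [mul_assoc, hb.left_comm]
    _ = c₂ * b₂ * (a * b₁ * c₁) := by rw [h₂]; simp only [mul_assoc]
    _ = _ := by rw [h₁]; simp only [mul_assoc]
  have rhs : c₂ * c₁ * (b₂ * b₁) * a = c₂ * (c₁ * b₂) * (b₁ * a) := by simp only [mul_assoc]
  rw [YangBaxter, lhs, rhs, mul_left_inj, mul_right_inj] at h
  exact h

end Algebra

variable {G : Type*} [Group G]

def succAbove (m x : ℕ) : ℕ := if x < m then x else x + 1

def predAbove (m x : ℕ) : ℕ := if x < m then x else x - 1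

theorem succAbove_predAbove {m x : ℕ} (h : x ≠ m) : succAbove m (predAbove m x) = x := by
  unfold succAbove predAbove; split_ifs <;> omega

theorem predAbove_ne {m x : ℕ} (h : x ≠ m) (h' : x ≠ m + 1) : predAbove m x ≠ m := by
  unfold predAbove; split_ifs <;> omega

-- `doubleStrand lam (t + 1)` is the map `S_t` on generators (`smap_lam` below).
def doubleStrand (z : ℕ → ℕ → G) (m x y : ℕ) : G :=
  if x = m then z m (succAbove m y) * z (m + 1) (succAbove m y)
  else if y = m then z (succAbove m x) (m + 1) * z (succAbove m x) m
  else z (succAbove m x) (succAbove m y)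

section doubleStrand

variable (z : ℕ → ℕ → G) {m x y : ℕ}

theorem doubleStrand_self_left :
    doubleStrand z m m y = z m (succAbove m y) * z (m + 1) (succAbove m y) := if_pos rfl

theorem doubleStrand_self_right (hx : x ≠ m) :
    doubleStrand z m x m = z (succAbove m x) (m + 1) * z (succAbove m x) m := by
  rw [doubleStrand, if_neg hx, if_pos rfl]

theorem doubleStrand_of_ne (hx : x ≠ m) (hy : y ≠ m) :
    doubleStrand z m x y = z (succAbove m x) (succAbove m y) := by
  rw [doubleStrand, if_neg hx, if_neg hy]

theorem doubleStrand_self_predAbove (hy : y ≠ m) :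
    doubleStrand z m m (predAbove m y) = z m y * z (m + 1) y := by
  rw [doubleStrand_self_left, succAbove_predAbove hy]

theorem doubleStrand_predAbove_self (hx : x ≠ m) (hx' : x ≠ m + 1) :
    doubleStrand z m (predAbove m x) m = z x (m + 1) * z x m := by
  rw [doubleStrand_self_right _ (predAbove_ne hx hx'), succAbove_predAbove hx]

theorem doubleStrand_predAbove_predAbove (hx : x ≠ m) (hx' : x ≠ m + 1) (hy : y ≠ m)
    (hy' : y ≠ m + 1) : doubleStrand z m (predAbove m x) (predAbove m y) = z x y := by
  rw [doubleStrand_of_ne _ (predAbove_ne hx hx') (predAbove_ne hy hy'), succAbove_predAbove hx,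
    succAbove_predAbove hy]

end doubleStrand

structure VPRel (z : ℕ → ℕ → G) (n : ℕ) : Prop where
  comm : ∀ a b c d : ℕ, 1 ≤ a ∧ a ≤ n ∧ 1 ≤ b ∧ b ≤ n ∧ 1 ≤ c ∧ c ≤ n ∧ 1 ≤ d ∧ d ≤ n ∧
    a ≠ b ∧ a ≠ c ∧ a ≠ d ∧ b ≠ c ∧ b ≠ d ∧ c ≠ d → Commute (z a b) (z c d)
  yangBaxter : ∀ i j l : ℕ, 1 ≤ i ∧ i ≤ n ∧ 1 ≤ j ∧ j ≤ n ∧ 1 ≤ l ∧ l ≤ n ∧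
    i ≠ j ∧ i ≠ l ∧ j ≠ l → YangBaxter (z l i) (z l j) (z i j)

/- `VPRel (doubleStrand z m) n` restated in the strands of `VP_{n+1}`: `succAbove m` identifies
the strands `≠ m` of `VP_n` with the strands `≠ m, m + 1` of `VP_{n+1}`. -/
structure DoublingRel (z : ℕ → ℕ → G) (n m : ℕ) : Prop where
  comm : ∀ a b c d : ℕ, 1 ≤ a ∧ a ≤ n + 1 ∧ 1 ≤ b ∧ b ≤ n + 1 ∧ 1 ≤ c ∧ c ≤ n + 1 ∧
    1 ≤ d ∧ d ≤ n + 1 ∧ a ≠ b ∧ a ≠ c ∧ a ≠ d ∧ b ≠ c ∧ b ≠ d ∧ c ≠ d ∧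
    a ≠ m ∧ a ≠ m + 1 ∧ b ≠ m ∧ b ≠ m + 1 ∧ c ≠ m ∧ c ≠ m + 1 ∧ d ≠ m ∧ d ≠ m + 1 →
    Commute (z a b) (z c d)
  comm_src : ∀ b c d : ℕ, 1 ≤ b ∧ b ≤ n + 1 ∧ 1 ≤ c ∧ c ≤ n + 1 ∧ 1 ≤ d ∧ d ≤ n + 1 ∧
    b ≠ c ∧ b ≠ d ∧ c ≠ d ∧ b ≠ m ∧ b ≠ m + 1 ∧ c ≠ m ∧ c ≠ m + 1 ∧ d ≠ m ∧ d ≠ m + 1 →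
    Commute (z m b * z (m + 1) b) (z c d)
  comm_tgt : ∀ a c d : ℕ, 1 ≤ a ∧ a ≤ n + 1 ∧ 1 ≤ c ∧ c ≤ n + 1 ∧ 1 ≤ d ∧ d ≤ n + 1 ∧
    a ≠ c ∧ a ≠ d ∧ c ≠ d ∧ a ≠ m ∧ a ≠ m + 1 ∧ c ≠ m ∧ c ≠ m + 1 ∧ d ≠ m ∧ d ≠ m + 1 →
    Commute (z a (m + 1) * z a m) (z c d)
  yangBaxter : ∀ i j l : ℕ, 1 ≤ i ∧ i ≤ n + 1 ∧ 1 ≤ j ∧ j ≤ n + 1 ∧ 1 ≤ l ∧ l ≤ n + 1 ∧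
    i ≠ j ∧ i ≠ l ∧ j ≠ l ∧ i ≠ m ∧ i ≠ m + 1 ∧ j ≠ m ∧ j ≠ m + 1 ∧ l ≠ m ∧ l ≠ m + 1 →
    YangBaxter (z l i) (z l j) (z i j)
  yangBaxter_src : ∀ i j : ℕ, 1 ≤ i ∧ i ≤ n + 1 ∧ 1 ≤ j ∧ j ≤ n + 1 ∧
    i ≠ j ∧ i ≠ m ∧ i ≠ m + 1 ∧ j ≠ m ∧ j ≠ m + 1 →
    YangBaxter (z m i * z (m + 1) i) (z m j * z (m + 1) j) (z i j)
  yangBaxter_mid : ∀ j l : ℕ, 1 ≤ j ∧ j ≤ n + 1 ∧ 1 ≤ l ∧ l ≤ n + 1 ∧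
    j ≠ l ∧ j ≠ m ∧ j ≠ m + 1 ∧ l ≠ m ∧ l ≠ m + 1 →
    YangBaxter (z l (m + 1) * z l m) (z l j) (z m j * z (m + 1) j)
  yangBaxter_tgt : ∀ i l : ℕ, 1 ≤ i ∧ i ≤ n + 1 ∧ 1 ≤ l ∧ l ≤ n + 1 ∧
    i ≠ l ∧ i ≠ m ∧ i ≠ m + 1 ∧ l ≠ m ∧ l ≠ m + 1 →
    YangBaxter (z l i) (z l (m + 1) * z l m) (z i (m + 1) * z i m)

section

variable {z : ℕ → ℕ → G} {n m : ℕ}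

theorem VPRel.doublingRel_of_doubleStrand (h : VPRel (doubleStrand z m) n) (hm : 1 ≤ m)
    (hmn : m ≤ n) : DoublingRel z n m where
  comm a b c d hs := by
    simpa (disch := omega) only [doubleStrand_predAbove_predAbove] using
      h.comm (predAbove m a) (predAbove m b) (predAbove m c) (predAbove m d)
        (by unfold predAbove; split_ifs <;> omega)
  comm_src b c d hs := by
    simpa (disch := omega) only [doubleStrand_predAbove_predAbove, doubleStrand_self_predAbove]
      using h.comm m (predAbove m b) (predAbove m c) (predAbove m d)
        (by unfold predAbove; split_ifs <;> omega)
  comm_tgt a c d hs := by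
    simpa (disch := omega) only [doubleStrand_predAbove_predAbove, doubleStrand_predAbove_self]
      using h.comm (predAbove m a) m (predAbove m c) (predAbove m d)
        (by unfold predAbove; split_ifs <;> omega)
  yangBaxter i j l hs := by
    simpa (disch := omega) only [doubleStrand_predAbove_predAbove] using
      h.yangBaxter (predAbove m i) (predAbove m j) (predAbove m l)
        (by unfold predAbove; split_ifs <;> omega)
  yangBaxter_src i j hs := by
    simpa (disch := omega) only [doubleStrand_predAbove_predAbove, doubleStrand_self_predAbove]
      using h.yangBaxter (predAbove m i) (predAbove m j) m
        (by unfold predAbove; split_ifs <;> omega)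
  yangBaxter_mid j l hs := by
    simpa (disch := omega) only [doubleStrand_predAbove_predAbove, doubleStrand_self_predAbove,
      doubleStrand_predAbove_self] using h.yangBaxter m (predAbove m j) (predAbove m l)
        (by unfold predAbove; split_ifs <;> omega)
  yangBaxter_tgt i l hs := by
    simpa (disch := omega) only [doubleStrand_predAbove_predAbove, doubleStrand_predAbove_self]
      using h.yangBaxter (predAbove m i) m (predAbove m l)
        (by unfold predAbove; split_ifs <;> omega)

theorem DoublingRel.vpRel_doubleStrand (h : DoublingRel z n m) :
    VPRel (doubleStrand z m) n := by
  constructor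
  · intro a b c d hs
    by_cases ha : a = m
    · subst ha
      rw [doubleStrand_self_left, doubleStrand_of_ne _ (by omega) (by omega)]
      exact h.comm_src _ _ _ (by unfold succAbove; split_ifs <;> omega)
    by_cases hb : b = m
    · subst hb
      rw [doubleStrand_self_right _ ha, doubleStrand_of_ne _ (by omega) (by omega)]
      exact h.comm_tgt _ _ _ (by unfold succAbove; split_ifs <;> omega)
    by_cases hc : c = m
    · subst hc
      rw [doubleStrand_self_left, doubleStrand_of_ne _ ha hb]
      exact (h.comm_src _ _ _ (by unfold succAbove; split_ifs <;> omega)).symm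
    by_cases hd : d = m
    · subst hd
      rw [doubleStrand_self_right _ hc, doubleStrand_of_ne _ ha hb]
      exact (h.comm_tgt _ _ _ (by unfold succAbove; split_ifs <;> omega)).symm
    rw [doubleStrand_of_ne _ ha hb, doubleStrand_of_ne _ hc hd]
    exact h.comm _ _ _ _ (by unfold succAbove; split_ifs <;> omega)
  · intro i j l hs
    by_cases hl : l = m
    · subst hl
      rw [doubleStrand_self_left, doubleStrand_self_left,
        doubleStrand_of_ne _ (by omega) (by omega)]
      exact h.yangBaxter_src _ _ (by unfold succAbove; split_ifs <;> omega)
    by_cases hi : i = m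
    · subst hi
      rw [doubleStrand_self_right _ hl, doubleStrand_of_ne _ hl (by omega), doubleStrand_self_left]
      exact h.yangBaxter_mid _ _ (by unfold succAbove; split_ifs <;> omega)
    by_cases hj : j = m
    · subst hj
      rw [doubleStrand_of_ne _ hl hi, doubleStrand_self_right _ hl, doubleStrand_self_right _ hi]
      exact h.yangBaxter_tgt _ _ (by unfold succAbove; split_ifs <;> omega)
    rw [doubleStrand_of_ne _ hl hi, doubleStrand_of_ne _ hl hj, doubleStrand_of_ne _ hi hj]
    exact h.yangBaxter _ _ _ (by unfold succAbove; split_ifs <;> omega)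

theorem vpRel_doubleStrand_iff (hm : 1 ≤ m) (hmn : m ≤ n) :
    VPRel (doubleStrand z m) n ↔ DoublingRel z n m :=
  ⟨fun h => h.doublingRel_of_doubleStrand hm hmn, DoublingRel.vpRel_doubleStrand⟩

theorem VPRel.mono {n' : ℕ} (h : VPRel z n') (hn : n ≤ n') : VPRel z n :=
  ⟨fun a b c d hs => h.comm a b c d (by omega), fun i j l hs => h.yangBaxter i j l (by omega)⟩

theorem VPRel.congr {z' : ℕ → ℕ → G} (h : VPRel z n) (hz : ∀ a b, a ≠ b → z a b = z' a b) :
    VPRel z' n where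
  comm a b c d hs := by
    rw [← hz a b (by omega), ← hz c d (by omega)]; exact h.comm a b c d hs
  yangBaxter i j l hs := by
    rw [← hz l i (by omega), ← hz l j (by omega), ← hz i j (by omega)]
    exact h.yangBaxter i j l hs

theorem VPRel.doublingRel (h : VPRel z (n + 1)) (hm : 1 ≤ m) (hmn : m ≤ n) :
    DoublingRel z n m where
  comm a b c d hs := h.comm a b c d (by omega)
  comm_src b c d hs := (h.comm m b c d (by omega)).mul_left (h.comm (m + 1) b c d (by omega))
  comm_tgt a c d hs := (h.comm a (m + 1) c d (by omega)).mul_left (h.comm a m c d (by omega))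
  yangBaxter i j l hs := h.yangBaxter i j l (by omega)
  yangBaxter_src i j hs :=
    (YangBaxter.mul_mul_left_iff (h.yangBaxter i j m (by omega)) (h.comm m i (m + 1) j (by omega))
      (h.comm (m + 1) i m j (by omega))).mpr (h.yangBaxter i j (m + 1) (by omega))
  yangBaxter_mid j l hs :=
    (YangBaxter.mul_left_mul_right_iff (h.yangBaxter m j l (by omega))
      (h.comm l m (m + 1) j (by omega)) (h.comm l (m + 1) m j (by omega))).mpr
      (h.yangBaxter (m + 1) j l (by omega))
  yangBaxter_tgt i l hs :=
    (YangBaxter.mul_mul_right_iff (h.yangBaxter i m l (by omega))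
      (h.comm l m i (m + 1) (by omega)) (h.comm l (m + 1) i m (by omega))).mpr
      (h.yangBaxter i (m + 1) l (by omega))

structure LiftingRel (z : ℕ → ℕ → G) (n : ℕ) : Prop where
  base : VPRel z n
  doubled : ∀ m, 1 ≤ m → m ≤ n → VPRel (doubleStrand z m) n

theorem LiftingRel.doubling (h : LiftingRel z n) (m : ℕ) (hm : 1 ≤ m) (hmn : m ≤ n) :
    DoublingRel z n m :=
  (vpRel_doubleStrand_iff hm hmn).mp (h.doubled m hm hmn)

theorem VPRel.liftingRel (h : VPRel z (n + 1)) : LiftingRel z n :=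
  ⟨h.mono n.le_succ, fun _ hm hmn => (vpRel_doubleStrand_iff hm hmn).mpr (h.doublingRel hm hmn)⟩

/- `λ_{i,j} ↦ λ_{j,i}` extends to an anti-automorphism of the free group that preserves `R^V(n)`
and commutes with the doubling maps; every statement about `z` therefore has a mirror image. -/
def transposeOp (z : ℕ → ℕ → G) (i j : ℕ) : Gᵐᵒᵖ := op (z j i)

theorem VPRel.transposeOp (h : VPRel z n) : VPRel (transposeOp z) n where
  comm a b c d hs := commute_op.mpr (h.comm b a d c (by omega))
  yangBaxter i j l hs := yangBaxter_op_iff.mpr (h.yangBaxter i l j (by omega)).symm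

theorem DoublingRel.transposeOp (h : DoublingRel z n m) : DoublingRel (transposeOp z) n m where
  comm a b c d hs := commute_op.mpr (h.comm b a d c (by omega))
  comm_src b c d hs := by
    simpa only [VirtualPureBraid.transposeOp, ← op_mul, commute_op]
      using h.comm_tgt b d c (by omega)
  comm_tgt a c d hs := by
    simpa only [VirtualPureBraid.transposeOp, ← op_mul, commute_op]
      using h.comm_src a d c (by omega)
  yangBaxter i j l hs := yangBaxter_op_iff.mpr (h.yangBaxter i l j (by omega)).symm
  yangBaxter_src i j hs := by
    simpa only [VirtualPureBraid.transposeOp, ← op_mul, yangBaxter_op_iff]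
      using (h.yangBaxter_tgt i j (by omega)).symm
  yangBaxter_mid j l hs := by
    simpa only [VirtualPureBraid.transposeOp, ← op_mul, yangBaxter_op_iff]
      using (h.yangBaxter_mid l j (by omega)).symm
  yangBaxter_tgt i l hs := by
    simpa only [VirtualPureBraid.transposeOp, ← op_mul, yangBaxter_op_iff]
      using (h.yangBaxter_src i l (by omega)).symm

theorem LiftingRel.transposeOp (h : LiftingRel z n) : LiftingRel (transposeOp z) n :=
  ⟨h.base.transposeOp, fun _ hm hmn =>
    (vpRel_doubleStrand_iff hm hmn).mpr (h.doubling _ hm hmn).transposeOp⟩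

end

section

variable {z : ℕ → ℕ → G}

theorem commute_of_transposeOp {a b c d : ℕ}
    (h : Commute (transposeOp z a b) (transposeOp z c d)) : Commute (z b a) (z d c) :=
  commute_op.mp h

theorem yangBaxter_of_transposeOp {a b c d e f : ℕ}
    (h : YangBaxter (transposeOp z a b) (transposeOp z c d) (transposeOp z e f)) :
    YangBaxter (z b a) (z d c) (z f e) :=
  yangBaxter_op_iff.mp h

/- Here `n = k + 4`; `k + 5` is the new strand, and the names `top` and `penult` refer to the
strands `k + 4` and `k + 3` below it. -/
namespace LiftingRel

variable {k : ℕ} (h : LiftingRel z (k + 4))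
include h

theorem commute_new_of_lt (x u v : ℕ)
    (hs : 1 ≤ x ∧ x ≤ k + 3 ∧ 1 ≤ u ∧ u ≤ k + 3 ∧ 1 ≤ v ∧ v ≤ k + 3 ∧ x ≠ u ∧ x ≠ v ∧ u ≠ v) :
    Commute (z x (k + 5)) (z u v) :=
  ((h.doubling (k + 4) (by omega) le_rfl).comm_tgt x u v (by omega)).left_of_mul_left
    (h.base.comm x (k + 4) u v (by omega))

theorem commute_from_new_of_lt (x u v : ℕ)
    (hs : 1 ≤ x ∧ x ≤ k + 3 ∧ 1 ≤ u ∧ u ≤ k + 3 ∧ 1 ≤ v ∧ v ≤ k + 3 ∧ x ≠ u ∧ x ≠ v ∧ u ≠ v) :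
    Commute (z (k + 5) x) (z u v) :=
  commute_of_transposeOp (h.transposeOp.commute_new_of_lt x v u (by omega))

theorem commute_new_top (x u : ℕ) (hs : 1 ≤ x ∧ x ≤ k + 2 ∧ 1 ≤ u ∧ u ≤ k + 2 ∧ x ≠ u) :
    Commute (z x (k + 5)) (z u (k + 4)) :=
  (((h.doubling (k + 3) (by omega) (by omega)).comm_tgt u x (k + 5) (by omega)).left_of_mul_left
    (h.commute_new_of_lt x u (k + 3) (by omega)).symm).symm

theorem commute_new_top' (x u : ℕ) (hs : 1 ≤ x ∧ x ≤ k + 2 ∧ 1 ≤ u ∧ u ≤ k + 2 ∧ x ≠ u) :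
    Commute (z x (k + 5)) (z (k + 4) u) :=
  (((h.doubling (k + 3) (by omega) (by omega)).comm_src u x (k + 5) (by omega)).right_of_mul_left
    (h.commute_new_of_lt x (k + 3) u (by omega)).symm).symm

theorem commute_top_new (u v : ℕ) (hs : 1 ≤ u ∧ u ≤ k + 3 ∧ 1 ≤ v ∧ v ≤ k + 3 ∧ u ≠ v) :
    Commute (z (k + 4) (k + 5)) (z u v) := by
  have low : ∀ u v, 1 ≤ u ∧ u ≤ k + 2 ∧ 1 ≤ v ∧ v ≤ k + 2 ∧ u ≠ v →
      Commute (z (k + 4) (k + 5)) (z u v) := fun u v hs =>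
    ((h.doubling (k + 3) (by omega) (by omega)).comm_src (k + 5) u v (by omega)).right_of_mul_left
      (h.commute_new_of_lt (k + 3) u v (by omega))
  have src : ∀ v, 1 ≤ v → v ≤ k + 1 → Commute (z (k + 4) (k + 5)) (z (k + 3) v) := fun v h1 h2 =>
    (((h.doubling (k + 2) (by omega) (by omega)).comm_src v (k + 4) (k + 5)
      (by omega)).right_of_mul_left (low (k + 2) v (by omega)).symm).symm
  have tgt : ∀ u, 1 ≤ u → u ≤ k + 1 → Commute (z (k + 4) (k + 5)) (z u (k + 3)) := fun u h1 h2 =>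
    (((h.doubling (k + 2) (by omega) (by omega)).comm_tgt u (k + 4) (k + 5)
      (by omega)).left_of_mul_left (low u (k + 2) (by omega)).symm).symm
  obtain ⟨rfl, rfl⟩ | ⟨rfl, rfl⟩ | ⟨rfl, hv⟩ | ⟨hu, rfl⟩ | hlow :
      (u = k + 3 ∧ v = k + 2) ∨ (u = k + 2 ∧ v = k + 3) ∨ (u = k + 3 ∧ v ≤ k + 1) ∨
        (u ≤ k + 1 ∧ v = k + 3) ∨ (u ≤ k + 2 ∧ v ≤ k + 2) := by omega
  · exact (((h.doubling (k + 1) (by omega) (by omega)).comm_tgt (k + 3) (k + 4) (k + 5)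
      (by omega)).left_of_mul_left (src (k + 1) (by omega) le_rfl).symm).symm
  · exact (((h.doubling (k + 1) (by omega) (by omega)).comm_src (k + 3) (k + 4) (k + 5)
      (by omega)).right_of_mul_left (tgt (k + 1) (by omega) le_rfl).symm).symm
  · exact src v (by omega) hv
  · exact tgt u (by omega) hu
  · exact low u v (by omega)

theorem yangBaxter_new_src_penult (x : ℕ) (hx : 1 ≤ x ∧ x ≤ k + 2) :
    YangBaxter (z (k + 5) x) (z (k + 5) (k + 3)) (z x (k + 3)) ∧
      YangBaxter (z (k + 5) (k + 3)) (z (k + 5) x) (z (k + 3) x) := by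
  have Dp := h.doubling (k + 3) (by omega) (by omega)
  have low : ∀ x, 1 ≤ x → x ≤ k + 1 →
      YangBaxter (z (k + 5) x) (z (k + 5) (k + 3)) (z x (k + 3)) ∧
        YangBaxter (z (k + 5) (k + 3)) (z (k + 5) x) (z (k + 3) x) := fun x h1 h2 =>
    have Dr := h.doubling (k + 2) (by omega) (by omega)
    ⟨(YangBaxter.mul_mul_right_iff (Dp.yangBaxter x (k + 2) (k + 5) (by omega))
        (h.commute_from_new_of_lt (k + 2) x (k + 3) (by omega))
        (h.commute_from_new_of_lt (k + 3) x (k + 2) (by omega))).mp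
        (Dr.yangBaxter_tgt x (k + 5) (by omega)),
      (YangBaxter.mul_left_mul_right_iff (Dp.yangBaxter (k + 2) x (k + 5) (by omega))
        (h.commute_from_new_of_lt (k + 2) (k + 3) x (by omega))
        (h.commute_from_new_of_lt (k + 3) (k + 2) x (by omega))).mp
        (Dr.yangBaxter_mid x (k + 5) (by omega))⟩
  obtain hx' | rfl : x ≤ k + 1 ∨ x = k + 2 := by omega
  · exact low x hx.1 hx'
  have Ds := h.doubling (k + 1) (by omega) (by omega)
  exact ⟨(YangBaxter.mul_left_mul_right_iff (low (k + 1) (by omega) le_rfl).1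
      (h.commute_from_new_of_lt (k + 1) (k + 2) (k + 3) (by omega))
      (h.commute_from_new_of_lt (k + 2) (k + 1) (k + 3) (by omega))).mp
      (Ds.yangBaxter_mid (k + 3) (k + 5) (by omega)),
    (YangBaxter.mul_mul_right_iff (low (k + 1) (by omega) le_rfl).2
      (h.commute_from_new_of_lt (k + 1) (k + 3) (k + 2) (by omega))
      (h.commute_from_new_of_lt (k + 2) (k + 3) (k + 1) (by omega))).mp
      (Ds.yangBaxter_tgt (k + 3) (k + 5) (by omega))⟩

theorem yangBaxter_new_src_top (x : ℕ) (hx : 1 ≤ x ∧ x ≤ k + 3) :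
    YangBaxter (z (k + 5) x) (z (k + 5) (k + 4)) (z x (k + 4)) ∧
      YangBaxter (z (k + 5) (k + 4)) (z (k + 5) x) (z (k + 4) x) := by
  have Dr := h.doubling (k + 2) (by omega) (by omega)
  obtain hx' | rfl | rfl : x ≤ k + 1 ∨ x = k + 2 ∨ x = k + 3 := by omega
  · exact ⟨Dr.yangBaxter x (k + 4) (k + 5) (by omega), Dr.yangBaxter (k + 4) x (k + 5) (by omega)⟩
  · have Ds := h.doubling (k + 1) (by omega) (by omega)
    exact ⟨(YangBaxter.mul_left_mul_right_iff (Dr.yangBaxter (k + 1) (k + 4) (k + 5) (by omega))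
        (commute_of_transposeOp (h.transposeOp.commute_new_top' (k + 1) (k + 2) (by omega)))
        (commute_of_transposeOp (h.transposeOp.commute_new_top' (k + 2) (k + 1) (by omega)))).mp
        (Ds.yangBaxter_mid (k + 4) (k + 5) (by omega)),
      (YangBaxter.mul_mul_right_iff (Dr.yangBaxter (k + 4) (k + 1) (k + 5) (by omega))
        (commute_of_transposeOp (h.transposeOp.commute_new_top (k + 1) (k + 2) (by omega)))
        (commute_of_transposeOp (h.transposeOp.commute_new_top (k + 2) (k + 1) (by omega)))).mp
        (Ds.yangBaxter_tgt (k + 4) (k + 5) (by omega))⟩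
  · have D1 := h.doubling 1 le_rfl (by omega)
    exact ⟨D1.yangBaxter (k + 3) (k + 4) (k + 5) (by omega),
      D1.yangBaxter (k + 4) (k + 3) (k + 5) (by omega)⟩

theorem yangBaxter_new_src (a b : ℕ)
    (hs : 1 ≤ a ∧ a ≤ k + 4 ∧ 1 ≤ b ∧ b ≤ k + 4 ∧ a ≠ b) :
    YangBaxter (z (k + 5) a) (z (k + 5) b) (z a b) := by
  obtain hlow | ⟨ha, rfl⟩ | ⟨rfl, hb⟩ | ⟨ha, rfl⟩ | ⟨rfl, hb⟩ :
      (a ≤ k + 2 ∧ b ≤ k + 2) ∨ (a ≤ k + 2 ∧ b = k + 3) ∨ (a = k + 3 ∧ b ≤ k + 2) ∨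
        (a ≤ k + 3 ∧ b = k + 4) ∨ (a = k + 4 ∧ b ≤ k + 3) := by omega
  · exact (h.doubling (k + 3) (by omega) (by omega)).yangBaxter a b (k + 5) (by omega)
  · exact (h.yangBaxter_new_src_penult a (by omega)).1
  · exact (h.yangBaxter_new_src_penult b (by omega)).2
  · exact (h.yangBaxter_new_src_top a (by omega)).1
  · exact (h.yangBaxter_new_src_top b (by omega)).2

theorem yangBaxter_new_mid_penult (x : ℕ) (hx : 1 ≤ x ∧ x ≤ k + 2) :
    YangBaxter (z x (k + 5)) (z x (k + 3)) (z (k + 5) (k + 3)) := by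
  have Dp := h.doubling (k + 3) (by omega) (by omega)
  have low : ∀ x, 1 ≤ x → x ≤ k + 1 →
      YangBaxter (z x (k + 5)) (z x (k + 3)) (z (k + 5) (k + 3)) := fun x h1 h2 =>
    (YangBaxter.mul_mul_right_iff (Dp.yangBaxter (k + 5) (k + 2) x (by omega))
      (h.commute_from_new_of_lt (k + 3) x (k + 2) (by omega)).symm
      (h.commute_from_new_of_lt (k + 2) x (k + 3) (by omega)).symm).mp
      ((h.doubling (k + 2) (by omega) (by omega)).yangBaxter_tgt (k + 5) x (by omega))
  obtain hx' | rfl : x ≤ k + 1 ∨ x = k + 2 := by omega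
  · exact low x hx.1 hx'
  exact (YangBaxter.mul_mul_left_iff (low (k + 1) (by omega) le_rfl)
    (h.commute_new_of_lt (k + 1) (k + 2) (k + 3) (by omega))
    (h.commute_new_of_lt (k + 2) (k + 1) (k + 3) (by omega))).mp
    ((h.doubling (k + 1) (by omega) (by omega)).yangBaxter_src (k + 5) (k + 3) (by omega))

theorem yangBaxter_new_mid_top (x : ℕ) (hx : 1 ≤ x ∧ x ≤ k + 2) :
    YangBaxter (z x (k + 5)) (z x (k + 4)) (z (k + 5) (k + 4)) := by
  have Dr := h.doubling (k + 2) (by omega) (by omega)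
  obtain hx' | rfl : x ≤ k + 1 ∨ x = k + 2 := by omega
  · exact Dr.yangBaxter (k + 5) (k + 4) x (by omega)
  exact (YangBaxter.mul_mul_left_iff (Dr.yangBaxter (k + 5) (k + 4) (k + 1) (by omega))
    (h.commute_new_top (k + 1) (k + 2) (by omega))
    (h.commute_new_top (k + 2) (k + 1) (by omega))).mp
    ((h.doubling (k + 1) (by omega) (by omega)).yangBaxter_src (k + 5) (k + 4) (by omega))

theorem yangBaxter_new_mid (l j : ℕ) (hs : 1 ≤ l ∧ l ≤ k + 4 ∧ 1 ≤ j ∧ j ≤ k + 4 ∧ l ≠ j) :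
    YangBaxter (z l (k + 5)) (z l j) (z (k + 5) j) := by
  obtain hlow | ⟨hl, rfl⟩ | ⟨rfl, hj⟩ | ⟨hl, rfl⟩ | ⟨rfl, hj⟩ | hpq :
      (l ≤ k + 2 ∧ j ≤ k + 2) ∨ (l ≤ k + 2 ∧ j = k + 3) ∨ (l = k + 3 ∧ j ≤ k + 2) ∨
        (l ≤ k + 2 ∧ j = k + 4) ∨ (l = k + 4 ∧ j ≤ k + 2) ∨ (k + 3 ≤ l ∧ k + 3 ≤ j) := by omega
  · exact (h.doubling (k + 3) (by omega) (by omega)).yangBaxter (k + 5) j l (by omega)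
  · exact h.yangBaxter_new_mid_penult l (by omega)
  · exact (yangBaxter_of_transposeOp (h.transposeOp.yangBaxter_new_mid_penult j (by omega))).symm
  · exact h.yangBaxter_new_mid_top l (by omega)
  · exact (yangBaxter_of_transposeOp (h.transposeOp.yangBaxter_new_mid_top j (by omega))).symm
  · exact (h.doubling 1 le_rfl (by omega)).yangBaxter (k + 5) j l (by omega)

theorem yangBaxter_new_tgt (l i : ℕ) (hs : 1 ≤ l ∧ l ≤ k + 4 ∧ 1 ≤ i ∧ i ≤ k + 4 ∧ l ≠ i) :
    YangBaxter (z l i) (z l (k + 5)) (z i (k + 5)) :=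
  (yangBaxter_of_transposeOp (h.transposeOp.yangBaxter_new_src i l (by omega))).symm

theorem commute_top_penult_new (a : ℕ) (ha : 1 ≤ a ∧ a ≤ k + 2) :
    Commute (z a (k + 4)) (z (k + 3) (k + 5)) :=
  ((h.doubling (k + 3) (by omega) (by omega)).yangBaxter_mid (k + 5) a
    (by omega)).commute_of_mul_left_mul_right (h.yangBaxter_new_tgt a (k + 3) (by omega))
    (h.yangBaxter_new_tgt a (k + 4) (by omega)) (h.commute_top_new a (k + 3) (by omega)).symm

theorem commute_top_penult_new' (a : ℕ) (ha : 1 ≤ a ∧ a ≤ k + 2) :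
    Commute (z (k + 4) a) (z (k + 3) (k + 5)) :=
  ((h.doubling (k + 3) (by omega) (by omega)).yangBaxter_src a (k + 5)
    (by omega)).commute_of_mul_mul_left (h.yangBaxter_new_tgt (k + 3) a (by omega))
    (h.yangBaxter_new_tgt (k + 4) a (by omega)) (h.commute_top_new (k + 3) a (by omega)).symm

theorem commute_new_penult_top (a : ℕ) (ha : 1 ≤ a ∧ a ≤ k + 2) :
    Commute (z a (k + 5)) (z (k + 3) (k + 4)) :=
  ((h.doubling (k + 4) (by omega) le_rfl).yangBaxter_tgt (k + 3) a
    (by omega)).commute_of_mul_mul_right (h.base.yangBaxter (k + 3) (k + 4) a (by omega))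
    (h.yangBaxter_new_tgt a (k + 3) (by omega)) (h.commute_top_penult_new a ha)

theorem commute_new_top_penult (a : ℕ) (ha : 1 ≤ a ∧ a ≤ k + 2) :
    Commute (z a (k + 5)) (z (k + 4) (k + 3)) :=
  ((h.doubling (k + 4) (by omega) le_rfl).yangBaxter_mid (k + 3) a
    (by omega)).commute_of_mul_left_mul_right (h.base.yangBaxter (k + 4) (k + 3) a (by omega))
    (h.yangBaxter_new_mid a (k + 3) (by omega))
    (commute_of_transposeOp (h.transposeOp.commute_top_penult_new' a ha))

theorem commute_new (x u v : ℕ) (hs : 1 ≤ x ∧ x ≤ k + 4 ∧ 1 ≤ u ∧ u ≤ k + 4 ∧ 1 ≤ v ∧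
    v ≤ k + 4 ∧ x ≠ u ∧ x ≠ v ∧ u ≠ v) : Commute (z x (k + 5)) (z u v) := by
  obtain rfl | hlow | ⟨rfl, hx, hu⟩ | ⟨rfl, hx, rfl⟩ | ⟨rfl, rfl⟩ | ⟨rfl, hx, hv⟩ | ⟨rfl, hx, rfl⟩ |
      ⟨rfl, rfl⟩ :
      x = k + 4 ∨ (x ≤ k + 3 ∧ u ≤ k + 3 ∧ v ≤ k + 3) ∨ (v = k + 4 ∧ x ≤ k + 2 ∧ u ≤ k + 2) ∨
        (v = k + 4 ∧ x ≤ k + 2 ∧ u = k + 3) ∨ (v = k + 4 ∧ x = k + 3) ∨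
        (u = k + 4 ∧ x ≤ k + 2 ∧ v ≤ k + 2) ∨ (u = k + 4 ∧ x ≤ k + 2 ∧ v = k + 3) ∨
        (u = k + 4 ∧ x = k + 3) := by omega
  · exact h.commute_top_new u v (by omega)
  · exact h.commute_new_of_lt x u v (by omega)
  · exact h.commute_new_top x u (by omega)
  · exact h.commute_new_penult_top x (by omega)
  · exact (h.commute_top_penult_new u (by omega)).symm
  · exact h.commute_new_top' x v (by omega)
  · exact h.commute_new_top_penult x (by omega)
  · exact (h.commute_top_penult_new' v (by omega)).symm

end LiftingRel

theorem LiftingRel.vpRel_succ {n : ℕ} (h : LiftingRel z n) (hn : 4 ≤ n) : VPRel z (n + 1) := by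
  obtain ⟨k, rfl⟩ : ∃ k, n = k + 4 := ⟨n - 4, by omega⟩
  constructor
  · intro a b c d hs
    obtain rfl | rfl | rfl | rfl | hold :
        b = k + 5 ∨ a = k + 5 ∨ d = k + 5 ∨ c = k + 5 ∨
          (a ≤ k + 4 ∧ b ≤ k + 4 ∧ c ≤ k + 4 ∧ d ≤ k + 4) := by omega
    · exact h.commute_new a c d (by omega)
    · exact commute_of_transposeOp (h.transposeOp.commute_new b d c (by omega))
    · exact (h.commute_new c a b (by omega)).symm
    · exact (commute_of_transposeOp (h.transposeOp.commute_new d b a (by omega))).symm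
    · exact h.base.comm a b c d (by omega)
  · intro i j l hs
    obtain rfl | rfl | rfl | hold :
        l = k + 5 ∨ i = k + 5 ∨ j = k + 5 ∨ (i ≤ k + 4 ∧ j ≤ k + 4 ∧ l ≤ k + 4) := by omega
    · exact h.yangBaxter_new_src i j (by omega)
    · exact h.yangBaxter_new_mid l j (by omega)
    · exact h.yangBaxter_new_tgt l i (by omega)
    · exact h.base.yangBaxter i j l (by omega)

end

theorem relators_vanish_iff {H : Type*} [Group H] (φ : FG →* H) (n : ℕ) :
    (∀ w ∈ RV n, φ w = 1) ↔ VPRel (fun a b => φ (lam a b)) n := by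
  simp only [RV, CR, LongR, Set.mem_union, Set.mem_ofPred_eq, or_imp, forall_and,
    forall_exists_index, and_imp]
  simp only [forall_comm (α := FG), forall_eq, map_mul, map_inv, ← commutatorElement_def,
    map_commutatorElement, commutatorElement_eq_one_iff_commute,
    mul_mul_mul_inv_mul_inv_mul_inv_eq_one_iff]
  constructor <;> rintro ⟨hc, hy⟩ <;>
    exact ⟨by simpa only [and_imp] using hc, by simpa only [and_imp] using hy⟩

theorem smap_lam {t x y : ℕ} (hxy : x ≠ y) : Smap t (lam x y) = doubleStrand lam (t + 1) x y := by
  rw [Smap, lam, FreeGroup.lift_apply_of]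
  unfold Sgen doubleStrand succAbove
  split_ifs <;> first | omega | (subst_vars; rfl)

theorem map_doubleStrand {G H : Type*} [Group G] [Group H] (φ : G →* H) (z : ℕ → ℕ → G)
    (m x y : ℕ) : φ (doubleStrand z m x y) = doubleStrand (fun a b => φ (z a b)) m x y := by
  unfold doubleStrand; split_ifs <;> simp only [map_mul]

theorem smap_relators_vanish_iff {H : Type*} [Group H] (φ : FG →* H) (n t : ℕ) :
    (∀ w ∈ RV n, φ (Smap t w) = 1) ↔ VPRel (doubleStrand (fun a b => φ (lam a b)) (t + 1)) n := by
  have hz : ∀ a b, a ≠ b →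
      φ (Smap t (lam a b)) = doubleStrand (fun a b => φ (lam a b)) (t + 1) a b :=
    fun a b hab => by rw [smap_lam hab, map_doubleStrand]
  rw [show (∀ w ∈ RV n, φ (Smap t w) = 1) ↔ _ from relators_vanish_iff (φ.comp (Smap t)) n]
  exact ⟨fun h => h.congr hz, fun h => h.congr fun a b hab => (hz a b hab).symm⟩

theorem liftingSet_vanish_iff {H : Type*} [Group H] (φ : FG →* H) (n : ℕ) :
    (∀ w ∈ RV n ∪ ⋃ i ∈ Finset.range n, (Smap i) '' (RV n), φ w = 1) ↔
      LiftingRel (fun a b => φ (lam a b)) n := by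
  constructor
  · intro h
    refine ⟨(relators_vanish_iff φ n).mp fun w hw => h w (Or.inl hw), fun m hm hmn => ?_⟩
    obtain ⟨t, rfl⟩ : ∃ t, m = t + 1 := ⟨m - 1, by omega⟩
    exact (smap_relators_vanish_iff φ n t).mp fun w hw =>
      h _ (Or.inr (Set.mem_iUnion₂.mpr ⟨t, Finset.mem_range.mpr (by omega), w, hw, rfl⟩))
  · rintro ⟨hbase, hdoubled⟩ w (hw | hw)
    · exact (relators_vanish_iff φ n).mpr hbase w hw
    · obtain ⟨t, ht, r, hr, rfl⟩ := Set.mem_iUnion₂.mp hw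
      exact (smap_relators_vanish_iff φ n t).mpr
        (hdoubled (t + 1) (by omega) (Finset.mem_range.mp ht)) r hr

end VirtualPureBraid

open VirtualPureBraid

/-- Lifting theorem: for every `n ≥ 4`, the set
`R^V(n) ∪ ⋃_{i=0}^{n-1} S_i(R^V(n))` has the same normal closure in `F_{n+1}`
as `R^V(n+1)`; i.e. it is a full set of defining relations for `VP_{n+1}`. -/
theorem lifting_theorem (n : ℕ) (hn : 4 ≤ n) :
    Subgroup.normalClosure (RV n ∪ ⋃ i ∈ Finset.range n, (Smap i) '' (RV n))
      = Subgroup.normalClosure (RV (n + 1)) := by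
  apply le_antisymm <;> apply Subgroup.normalClosure_le_normalClosure_of_forall <;>
    intro H _ φ hφ
  · exact (liftingSet_vanish_iff φ n).mpr ((relators_vanish_iff φ (n + 1)).mp hφ).liftingRel
  · exact (relators_vanish_iff φ (n + 1)).mpr (((liftingSet_vanish_iff φ n).mp hφ).vpRel_succ hn)
end

section
/- In the free group F_5, the four commutators [λ_{3,5},λ_{1,2}], [λ_{4,5},λ_{1,2}], [λ_{4,5},λ_{1,3}], [λ_{4,5},λ_{2,3}] all lie in the normal closure of the set {S_i(λ_{3,4}λ_{1,2}λ_{3,4}^{-1}λ_{1,2}^{-1}) : i = 0,1,2,3} ∪ {[λ_{2,5},λ_{1,4}], [λ_{2,5},λ_{1,3}], [λ_{3,5},λ_{1,4}], [λ_{3,5},λ_{2,4}]} ∪ CR(4), where S_i : F_4 → F_5 and CR(4) ⊆ F_5 via the canonical inclusion F_4 → F_5. -/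
/-- The relator `λ_{3,4} λ_{1,2} λ_{3,4}⁻¹ λ_{1,2}⁻¹` of `F_4`. -/
def r8 : FG := lam 3 4 * lam 1 2 * (lam 3 4)⁻¹ * (lam 1 2)⁻¹

/-- The normal closure in `F_5` of `{S_i(λ_{3,4}λ_{1,2}λ_{3,4}⁻¹λ_{1,2}⁻¹) : i = 0,1,2,3}`
together with the commutators `[λ_{2,5},λ_{1,4}], [λ_{2,5},λ_{1,3}], [λ_{3,5},λ_{1,4}],
[λ_{3,5},λ_{2,4}]` and `CR(4)`. -/
def N8 : Subgroup FG :=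
  Subgroup.normalClosure
    ({Smap 0 r8, Smap 1 r8, Smap 2 r8, Smap 3 r8} ∪
     {commE (lam 2 5) (lam 1 4), commE (lam 2 5) (lam 1 3),
      commE (lam 3 5) (lam 1 4), commE (lam 3 5) (lam 2 4)} ∪ CR 4)


/-! Modulo `N8`, the four lifts `S_t(r8)` say that `λ₄₅` commutes with `λ₁₃λ₂₃` and with
`λ₁₃λ₁₂`, and that `λ₃₅λ₄₅` and `λ₃₅λ₃₄` commute with `λ₁₂`; `CR(4)` adds that `λ₃₄` commutes
with `λ₁₂`. Cancelling a factor already known to commute, one relation at a time, shows in turn that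
`[λ₃₅, λ₁₂]`, `[λ₄₅, λ₁₂]`, `[λ₄₅, λ₁₃]` and `[λ₄₅, λ₂₃]` vanish. -/

open scoped commutatorElement

section CommuteQuotient

variable {G : Type*} [Group G]

namespace Commute

variable {a b c : G}

theorem of_mul_left_of_right (h : Commute (a * b) c) (hb : Commute b c) : Commute a c := by
  simpa using h.mul_left hb.inv_left

theorem of_mul_left_of_left (h : Commute (a * b) c) (ha : Commute a c) : Commute b c := by
  simpa using ha.inv_left.mul_left h

theorem of_mul_right_of_right (h : Commute a (b * c)) (hc : Commute a c) : Commute a b :=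
  (h.symm.of_mul_left_of_right hc.symm).symm

theorem of_mul_right_of_left (h : Commute a (b * c)) (hb : Commute a b) : Commute a c :=
  (h.symm.of_mul_left_of_left hb.symm).symm

end Commute

theorem commutatorElement_mem_iff_commute_mk (N : Subgroup G) [N.Normal] (a b : G) :
    ⁅a, b⁆ ∈ N ↔ Commute (a : G ⧸ N) (b : G ⧸ N) := by
  rw [← QuotientGroup.eq_one_iff, ← commutatorElement_eq_one_iff_commute]
  exact Iff.rfl

end CommuteQuotient

instance N8_normal : N8.Normal := Subgroup.normalClosure_normal

theorem commE_eq_commutatorElement (a b : FG) : commE a b = ⁅a⁻¹, b⁻¹⁆ := by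
  simp [commE, commutatorElement_def]

theorem commE_mem_iff_commute_mk (N : Subgroup FG) [N.Normal] (a b : FG) :
    commE a b ∈ N ↔ Commute (a : FG ⧸ N) (b : FG ⧸ N) := by
  rw [commE_eq_commutatorElement, commutatorElement_mem_iff_commute_mk, QuotientGroup.mk_inv,
    QuotientGroup.mk_inv, Commute.inv_inv_iff]

theorem Smap_r8_mem_N8 {t : ℕ} (ht : t ≤ 3) : Smap t r8 ∈ N8 := by
  apply Subgroup.subset_normalClosure
  interval_cases t <;> simp

theorem r8_mem_N8 : r8 ∈ N8 :=
  Subgroup.subset_normalClosure (Or.inr ⟨3, 4, 1, 2, by norm_num [r8]⟩)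

theorem r8_eq : r8 = ⁅lam 3 4, lam 1 2⁆ := rfl

theorem Smap_zero_r8 : Smap 0 r8 = ⁅lam 4 5, lam 1 3 * lam 2 3⁆ := by
  simp [Smap, r8, lam, Sgen, commutatorElement_def]

theorem Smap_one_r8 : Smap 1 r8 = ⁅lam 4 5, lam 1 3 * lam 1 2⁆ := by
  simp [Smap, r8, lam, Sgen, commutatorElement_def]

theorem Smap_two_r8 : Smap 2 r8 = ⁅lam 3 5 * lam 4 5, lam 1 2⁆ := by
  simp [Smap, r8, lam, Sgen, commutatorElement_def]

theorem Smap_three_r8 : Smap 3 r8 = ⁅lam 3 5 * lam 3 4, lam 1 2⁆ := by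
  simp [Smap, r8, lam, Sgen, commutatorElement_def]

theorem comms_from_lifting_34_12 :
    commE (lam 3 5) (lam 1 2) ∈ N8 ∧ commE (lam 4 5) (lam 1 2) ∈ N8 ∧
    commE (lam 4 5) (lam 1 3) ∈ N8 ∧ commE (lam 4 5) (lam 2 3) ∈ N8 := by
  have commute_of_mem {a b : FG} (h : ⁅a, b⁆ ∈ N8) : Commute (a : FG ⧸ N8) (b : FG ⧸ N8) :=
    (commutatorElement_mem_iff_commute_mk N8 a b).1 h
  have h₀ := commute_of_mem (Smap_zero_r8 ▸ Smap_r8_mem_N8 (by norm_num))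
  have h₁ := commute_of_mem (Smap_one_r8 ▸ Smap_r8_mem_N8 (by norm_num))
  have h₂ := commute_of_mem (Smap_two_r8 ▸ Smap_r8_mem_N8 (by norm_num))
  have h₃ := commute_of_mem (Smap_three_r8 ▸ Smap_r8_mem_N8 (by norm_num))
  have c34_12 := commute_of_mem (r8_eq ▸ r8_mem_N8)
  simp only [QuotientGroup.mk_mul] at h₀ h₁ h₂ h₃
  have c35_12 := h₃.of_mul_left_of_right c34_12
  have c45_12 := h₂.of_mul_left_of_left c35_12
  have c45_13 := h₁.of_mul_right_of_right c45_12
  have c45_23 := h₀.of_mul_right_of_left c45_13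
  simp only [commE_mem_iff_commute_mk]
  exact ⟨c35_12, c45_12, c45_13, c45_23⟩
end

section
/- For every n ≥ 4 and all 1 ≤ i < j ≤ n, every relator of the long-relation set R_{i,j,n+1} lies in the normal closure, in F_{n+1}, of the set R^V(n) ∪ ⋃_{l=0}^{n−1} S_l(R^V(n)) ∪ CR(n+1), where R^V(n) ⊆ F_{n+1} via the canonical inclusion F_n → F_{n+1}. -/
/-!
Doubling strand `d` by `S_{d-1}` turns a long relation on strands `x, y, d` into a relation in
which each generator at `d` becomes a product of the corresponding generators at `d` and `d + 1`.
Once the long relation on the first copy `d` is known, the commutativity relations of `CR(n + 1)`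
move the two copies past each other, and what remains of the image is the long relation on the
second copy `d + 1`. Doubling `d = n` gives `R_{i,j,n+1}` for `j < n`; doubling `d = n - 1`, with
the first copy supplied by that case, gives `R_{i,n,n+1}` for `i < n - 1`; doubling `d = n - 2`
then gives `R_{n-1,n,n+1}`.
-/

section Reversal

variable {G : Type*} [Group G]

theorem mul_mul_eq_rev_of_split₁₂ {p p' q q' r : G} (h : p * q * r = r * q * p)
    (hp'q : Commute p' q) (hpq' : Commute p q')
    (himg : p * p' * (q * q') * r = r * (q * q') * (p * p')) :
    p' * q' * r = r * q' * p' := by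
  refine mul_left_cancel (a := p * q) ?_
  calc p * q * (p' * q' * r) = p * p' * (q * q') * r := by
        simp only [mul_assoc, hp'q.left_comm]
    _ = r * (q * q') * (p * p') := himg
    _ = r * q * p * (q' * p') := by simp only [mul_assoc, ← hpq'.left_comm]
    _ = p * q * (r * q' * p') := by rw [← h]; simp only [mul_assoc]

theorem mul_mul_eq_rev_of_split₁₃ {x x' y z z' : G} (h : x * y * z = z * y * x)
    (hx'z : Commute x' z) (hxz' : Commute x z')
    (himg : x' * x * y * (z * z') = z * z' * y * (x' * x)) :
    x' * y * z' = z' * y * x' := by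
  refine mul_left_cancel (a := z) (mul_right_cancel (b := x) ?_)
  calc z * (x' * y * z') * x = x' * (z * y * x) * z' := by
        simp only [mul_assoc, hxz'.eq, hx'z.left_comm]
    _ = x' * x * y * (z * z') := by rw [← h]; simp only [mul_assoc]
    _ = z * z' * y * (x' * x) := himg
    _ = z * (z' * y * x') * x := by simp only [mul_assoc]

theorem mul_mul_eq_rev_of_split₂₃ {x y y' z z' : G} (h : x * y * z = z * y * x)
    (hyz' : Commute y z') (hy'z : Commute y' z)
    (himg : x * (y' * y) * (z' * z) = z' * z * (y' * y) * x) :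
    x * y' * z' = z' * y' * x := by
  refine mul_right_cancel (b := y * z) ?_
  calc x * y' * z' * (y * z) = x * (y' * y) * (z' * z) := by
        simp only [mul_assoc, hyz'.left_comm]
    _ = z' * z * (y' * y) * x := himg
    _ = z' * y' * (z * y * x) := by simp only [mul_assoc, hy'z.left_comm]
    _ = z' * y' * x * (y * z) := by rw [← h]; simp only [mul_assoc]

end Reversal

/-- The long relator of `LongR` on strands `a b c`; we call `c` its head, `a` its middle and `b`
its tail strand. -/
def longRel (a b c : ℕ) : FG :=
  lam c a * lam c b * lam a b * (lam c a)⁻¹ * (lam c b)⁻¹ * (lam a b)⁻¹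

theorem longRel_mem_LongR {m a b c : ℕ} (ha : 1 ≤ a) (ham : a ≤ m) (hb : 1 ≤ b) (hbm : b ≤ m)
    (hc : 1 ≤ c) (hcm : c ≤ m) (hab : a ≠ b) (hac : a ≠ c) (hbc : b ≠ c) :
    longRel a b c ∈ LongR m :=
  ⟨a, b, c, ha, ham, hb, hbm, hc, hcm, hab, hac, hbc, rfl⟩

theorem Rtriple_eq (i j k : ℕ) :
    Rtriple i j k = {longRel j k i, longRel i k j, longRel k j i,
      longRel i j k, longRel k i j, longRel j i k} := by
  simp only [Rtriple, relOf, longRel, mul_inv_rev, mul_assoc]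

theorem Rtriple_subset_LongR {m x y z : ℕ} (hx : 1 ≤ x) (hxm : x ≤ m) (hy : 1 ≤ y)
    (hym : y ≤ m) (hz : 1 ≤ z) (hzm : z ≤ m) (hxy : x ≠ y) (hxz : x ≠ z) (hyz : y ≠ z) :
    Rtriple x y z ⊆ LongR m := by
  simp only [Rtriple_eq, Set.insert_subset_iff, Set.singleton_subset_iff]
  refine ⟨?_, ?_, ?_, ?_, ?_, ?_⟩ <;> apply longRel_mem_LongR <;> omega

section Quotient

variable {N : Subgroup FG} [N.Normal]

theorem map_longRel_mem_iff (g : FG →* FG) (a b c : ℕ) :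
    g (longRel a b c) ∈ N ↔
      (g (lam c a) : FG ⧸ N) * g (lam c b) * g (lam a b) =
        g (lam a b) * g (lam c b) * g (lam c a) := by
  rw [← QuotientGroup.eq_one_iff, ← mul_inv_eq_one (a := (g (lam c a) : FG ⧸ N) * _ * _)]
  simp only [longRel, map_mul, map_inv, QuotientGroup.mk_mul, QuotientGroup.mk_inv, mul_inv_rev,
    mul_assoc]

theorem longRel_mem_iff (a b c : ℕ) :
    longRel a b c ∈ N ↔
      (lam c a : FG ⧸ N) * lam c b * lam a b = lam a b * lam c b * lam c a :=
  map_longRel_mem_iff (MonoidHom.id FG) a b c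

theorem commute_of_CR_subset {m : ℕ} (hCR : CR m ⊆ N) {p q r s : ℕ}
    (hp : 1 ≤ p) (hpm : p ≤ m) (hq : 1 ≤ q) (hqm : q ≤ m) (hr : 1 ≤ r) (hrm : r ≤ m)
    (hs : 1 ≤ s) (hsm : s ≤ m) (hpq : p ≠ q) (hpr : p ≠ r) (hps : p ≠ s) (hqr : q ≠ r)
    (hqs : q ≠ s) (hrs : r ≠ s) :
    Commute (lam p q : FG ⧸ N) (lam r s) := by
  have h := hCR ⟨p, q, r, s, hp, hpm, hq, hqm, hr, hrm, hs, hsm, hpq, hpr, hps, hqr, hqs, hrs, rfl⟩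
  rwa [SetLike.mem_coe, ← QuotientGroup.eq_one_iff, QuotientGroup.mk_mul, QuotientGroup.mk_mul,
    QuotientGroup.mk_mul, QuotientGroup.mk_inv, QuotientGroup.mk_inv, mul_inv_eq_one,
    mul_inv_eq_iff_eq_mul] at h

end Quotient

-- `S_{d-1}` doubles strand `d`: strand `x ≠ d` becomes `strandLo d x = strandHi d x`, and
-- strand `d` becomes the pair `strandLo d d = d`, `strandHi d d = d + 1`.
def strandLo (d x : ℕ) : ℕ := if x ≤ d then x else x + 1

def strandHi (d x : ℕ) : ℕ := if x < d then x else x + 1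

theorem strandLo_of_le {d x : ℕ} (h : x ≤ d) : strandLo d x = x := if_pos h

theorem strandLo_of_lt {d x : ℕ} (h : d < x) : strandLo d x = x + 1 := if_neg (by omega)

theorem strandHi_of_lt {d x : ℕ} (h : x < d) : strandHi d x = x := if_pos h

theorem strandHi_of_le {d x : ℕ} (h : d ≤ x) : strandHi d x = x + 1 := if_neg (by omega)

theorem strandHi_of_ne {d x : ℕ} (h : x ≠ d) : strandHi d x = strandLo d x := by
  unfold strandHi strandLo
  split_ifs <;> omega

theorem strandLo_strictMono (d : ℕ) : StrictMono (strandLo d) := by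
  intro x y hxy
  unfold strandLo
  split_ifs <;> omega

theorem strandLo_bounds {d m x : ℕ} (hx : 1 ≤ x) (hxm : x ≤ m) (hxd : x ≠ d) :
    1 ≤ strandLo d x ∧ strandLo d x ≤ m + 1 ∧ strandLo d x ≠ d ∧ strandLo d x ≠ d + 1 := by
  unfold strandLo
  split_ifs <;> omega

theorem Smap_lam_of_ne {d x y : ℕ} (hd : 1 ≤ d) (hxd : x ≠ d) (hyd : y ≠ d) (hxy : x ≠ y) :
    Smap (d - 1) (lam x y) = lam (strandLo d x) (strandLo d y) := by
  rw [Smap, lam, FreeGroup.lift_apply_of, Nat.sub_add_cancel hd]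
  unfold Sgen strandLo
  split_ifs <;> first | rfl | omega

theorem Smap_lam_head {d x : ℕ} (hd : 1 ≤ d) (hxd : x ≠ d) :
    Smap (d - 1) (lam d x) = lam d (strandLo d x) * lam (d + 1) (strandLo d x) := by
  rw [Smap, lam, FreeGroup.lift_apply_of, Nat.sub_add_cancel hd]
  unfold Sgen strandLo
  split_ifs <;> first | rfl | omega

theorem Smap_lam_tail {d x : ℕ} (hd : 1 ≤ d) (hxd : x ≠ d) :
    Smap (d - 1) (lam x d) = lam (strandLo d x) (d + 1) * lam (strandLo d x) d := by
  rw [Smap, lam, FreeGroup.lift_apply_of, Nat.sub_add_cancel hd]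
  unfold Sgen strandLo
  split_ifs <;> first | rfl | omega

section Doubling

variable {N : Subgroup FG} [N.Normal] {m d : ℕ}

theorem longRel_mem_of_double_head (hCR : CR (m + 1) ⊆ N) (hd : 1 ≤ d) (hdm : d ≤ m)
    {a b : ℕ} (ha : 1 ≤ a) (ham : a ≤ m) (hb : 1 ≤ b) (hbm : b ≤ m)
    (had : a ≠ d) (hbd : b ≠ d) (hab : a ≠ b)
    (hlo : longRel (strandLo d a) (strandLo d b) d ∈ N)
    (himg : Smap (d - 1) (longRel a b d) ∈ N) :
    longRel (strandLo d a) (strandLo d b) (d + 1) ∈ N := by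
  obtain ⟨ha₁, ha₂, ha₃, ha₄⟩ := strandLo_bounds ha ham had
  obtain ⟨hb₁, hb₂, hb₃, hb₄⟩ := strandLo_bounds hb hbm hbd
  have hab' := (strandLo_strictMono d).injective.ne hab
  rw [longRel_mem_iff] at hlo ⊢
  rw [map_longRel_mem_iff, Smap_lam_head hd had, Smap_lam_head hd hbd,
    Smap_lam_of_ne hd had hbd hab] at himg
  simp only [QuotientGroup.mk_mul] at himg
  exact mul_mul_eq_rev_of_split₁₂ hlo (by apply commute_of_CR_subset hCR <;> omega)
    (by apply commute_of_CR_subset hCR <;> omega) himg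

theorem longRel_mem_of_double_mid (hCR : CR (m + 1) ⊆ N) (hd : 1 ≤ d) (hdm : d ≤ m)
    {b c : ℕ} (hb : 1 ≤ b) (hbm : b ≤ m) (hc : 1 ≤ c) (hcm : c ≤ m)
    (hbd : b ≠ d) (hcd : c ≠ d) (hbc : b ≠ c)
    (hlo : longRel d (strandLo d b) (strandLo d c) ∈ N)
    (himg : Smap (d - 1) (longRel d b c) ∈ N) :
    longRel (d + 1) (strandLo d b) (strandLo d c) ∈ N := by
  obtain ⟨hb₁, hb₂, hb₃, hb₄⟩ := strandLo_bounds hb hbm hbd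
  obtain ⟨hc₁, hc₂, hc₃, hc₄⟩ := strandLo_bounds hc hcm hcd
  have hbc' := (strandLo_strictMono d).injective.ne hbc
  rw [longRel_mem_iff] at hlo ⊢
  rw [map_longRel_mem_iff, Smap_lam_tail hd hcd, Smap_lam_head hd hbd,
    Smap_lam_of_ne hd hcd hbd hbc.symm] at himg
  simp only [QuotientGroup.mk_mul] at himg
  exact mul_mul_eq_rev_of_split₁₃ hlo (by apply commute_of_CR_subset hCR <;> omega)
    (by apply commute_of_CR_subset hCR <;> omega) himg

theorem longRel_mem_of_double_tail (hCR : CR (m + 1) ⊆ N) (hd : 1 ≤ d) (hdm : d ≤ m)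
    {a c : ℕ} (ha : 1 ≤ a) (ham : a ≤ m) (hc : 1 ≤ c) (hcm : c ≤ m)
    (had : a ≠ d) (hcd : c ≠ d) (hac : a ≠ c)
    (hlo : longRel (strandLo d a) d (strandLo d c) ∈ N)
    (himg : Smap (d - 1) (longRel a d c) ∈ N) :
    longRel (strandLo d a) (d + 1) (strandLo d c) ∈ N := by
  obtain ⟨ha₁, ha₂, ha₃, ha₄⟩ := strandLo_bounds ha ham had
  obtain ⟨hc₁, hc₂, hc₃, hc₄⟩ := strandLo_bounds hc hcm hcd
  have hac' := (strandLo_strictMono d).injective.ne hac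
  rw [longRel_mem_iff] at hlo ⊢
  rw [map_longRel_mem_iff, Smap_lam_tail hd hcd, Smap_lam_tail hd had,
    Smap_lam_of_ne hd hcd had hac.symm] at himg
  simp only [QuotientGroup.mk_mul] at himg
  exact mul_mul_eq_rev_of_split₂₃ hlo (by apply commute_of_CR_subset hCR <;> omega)
    (by apply commute_of_CR_subset hCR <;> omega) himg

theorem longRel_mem_of_doubling (hCR : CR (m + 1) ⊆ N) (hd : 1 ≤ d) (hdm : d ≤ m)
    {a b c : ℕ} (ha : 1 ≤ a) (ham : a ≤ m) (hb : 1 ≤ b) (hbm : b ≤ m) (hc : 1 ≤ c) (hcm : c ≤ m)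
    (hab : a ≠ b) (hac : a ≠ c) (hbc : b ≠ c)
    (hlo : longRel (strandLo d a) (strandLo d b) (strandLo d c) ∈ N)
    (himg : Smap (d - 1) (longRel a b c) ∈ N) :
    longRel (strandHi d a) (strandHi d b) (strandHi d c) ∈ N := by
  have hLo : strandLo d d = d := strandLo_of_le le_rfl
  have hHi : strandHi d d = d + 1 := strandHi_of_le le_rfl
  rcases eq_or_ne c d with rfl | hcd
  · rw [hLo] at hlo
    rw [hHi, strandHi_of_ne hac, strandHi_of_ne hbc]
    exact longRel_mem_of_double_head hCR hd hdm ha ham hb hbm hac hbc hab hlo himg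
  rcases eq_or_ne a d with rfl | had
  · rw [hLo] at hlo
    rw [hHi, strandHi_of_ne hab.symm, strandHi_of_ne hac.symm]
    exact longRel_mem_of_double_mid hCR hd hdm hb hbm hc hcm hab.symm hac.symm hbc hlo himg
  rcases eq_or_ne b d with rfl | hbd
  · rw [hLo] at hlo
    rw [hHi, strandHi_of_ne hab, strandHi_of_ne hbc.symm]
    exact longRel_mem_of_double_tail hCR hd hdm ha ham hc hcm hab hbc.symm hac hlo himg
  rwa [strandHi_of_ne had, strandHi_of_ne hbd, strandHi_of_ne hcd]

theorem Rtriple_subset_of_doubling (hCR : CR (m + 1) ⊆ N) (hd : 1 ≤ d) (hdm : d ≤ m)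
    {x y z : ℕ} (hx : 1 ≤ x) (hxm : x ≤ m) (hy : 1 ≤ y) (hym : y ≤ m) (hz : 1 ≤ z) (hzm : z ≤ m)
    (hxy : x ≠ y) (hxz : x ≠ z) (hyz : y ≠ z)
    (hlo : Rtriple (strandLo d x) (strandLo d y) (strandLo d z) ⊆ N)
    (himg : Smap (d - 1) '' Rtriple x y z ⊆ N) :
    Rtriple (strandHi d x) (strandHi d y) (strandHi d z) ⊆ N := by
  simp only [Rtriple_eq, Set.image_insert_eq, Set.image_singleton, Set.insert_subset_iff,
    Set.singleton_subset_iff] at hlo himg ⊢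
  obtain ⟨hlo₁, hlo₂, hlo₃, hlo₄, hlo₅, hlo₆⟩ := hlo
  obtain ⟨himg₁, himg₂, himg₃, himg₄, himg₅, himg₆⟩ := himg
  refine ⟨?_, ?_, ?_, ?_, ?_, ?_⟩ <;> apply longRel_mem_of_doubling hCR hd hdm <;>
    first | assumption | omega

end Doubling

section Lift

variable {N : Subgroup FG} {n : ℕ}

theorem Rtriple_succ_subset_of_lt [N.Normal] (hCR : CR (n + 1) ⊆ N) (hLong : LongR n ⊆ N)
    (hImg : ∀ t < n, Smap t '' LongR n ⊆ N) {i j : ℕ} (hi : 1 ≤ i) (hij : i < j) (hjn : j < n) :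
    Rtriple i j (n + 1) ⊆ N := by
  have hold : Rtriple i j n ⊆ LongR n := by apply Rtriple_subset_LongR <;> omega
  have h := Rtriple_subset_of_doubling (d := n) hCR (by omega) le_rfl (x := i) (y := j) (z := n)
    (by omega) (by omega) (by omega) (by omega) (by omega) le_rfl (by omega) (by omega) (by omega)
    (by rw [strandLo_of_le (by omega), strandLo_of_le (by omega), strandLo_of_le le_rfl]
        exact hold.trans hLong)
    ((Set.image_mono hold).trans (hImg (n - 1) (by omega)))
  rwa [strandHi_of_lt (by omega), strandHi_of_lt hjn, strandHi_of_le le_rfl] at h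

theorem Rtriple_self_succ_subset [N.Normal] (hCR : CR (n + 1) ⊆ N) (hLong : LongR n ⊆ N)
    (hImg : ∀ t < n, Smap t '' LongR n ⊆ N) {i : ℕ} (hi : 1 ≤ i) (hin : i + 1 < n) :
    Rtriple i n (n + 1) ⊆ N := by
  have hold : Rtriple i (n - 1) n ⊆ LongR n := by apply Rtriple_subset_LongR <;> omega
  have h := Rtriple_subset_of_doubling (d := n - 1) hCR (by omega) (by omega)
    (x := i) (y := n - 1) (z := n) (by omega) (by omega) (by omega) (by omega) (by omega) le_rfl
    (by omega) (by omega) (by omega)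
    (by rw [strandLo_of_le (by omega), strandLo_of_le le_rfl, strandLo_of_lt (by omega)]
        exact Rtriple_succ_subset_of_lt hCR hLong hImg hi (by omega) (by omega))
    ((Set.image_mono hold).trans (hImg (n - 1 - 1) (by omega)))
  rwa [strandHi_of_lt (by omega), strandHi_of_le le_rfl, strandHi_of_le (by omega),
    Nat.sub_add_cancel (by omega)] at h

theorem Rtriple_pred_self_succ_subset [N.Normal] (hCR : CR (n + 1) ⊆ N)
    (hLong : LongR n ⊆ N) (hImg : ∀ t < n, Smap t '' LongR n ⊆ N) (hn : 3 ≤ n) :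
    Rtriple (n - 1) n (n + 1) ⊆ N := by
  have hold : Rtriple (n - 2) (n - 1) n ⊆ LongR n := by apply Rtriple_subset_LongR <;> omega
  have h := Rtriple_subset_of_doubling (d := n - 2) hCR (by omega) (by omega)
    (x := n - 2) (y := n - 1) (z := n) (by omega) (by omega) (by omega) (by omega) (by omega)
    le_rfl (by omega) (by omega) (by omega)
    (by rw [strandLo_of_le le_rfl, strandLo_of_lt (by omega), strandLo_of_lt (by omega),
          Nat.sub_add_cancel (by omega)]
        exact Rtriple_self_succ_subset hCR hLong hImg (by omega) (by omega))
    ((Set.image_mono hold).trans (hImg (n - 2 - 1) (by omega)))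
  rwa [strandHi_of_le le_rfl, strandHi_of_le (by omega), strandHi_of_le (by omega),
    show n - 2 + 1 = n - 1 by omega, Nat.sub_add_cancel (by omega)] at h

end Lift

/-- for every `n ≥ 4` and all `1 ≤ i < j ≤ n`, every relator of the
long-relation set `R_{i,j,n+1}` lies in the normal closure in `F_{n+1}` of
`R^V(n) ∪ ⋃_{l=0}^{n-1} S_l(R^V(n)) ∪ CR(n+1)`. -/
theorem long_relations_lift (n i j : ℕ) (hn : 4 ≤ n) (hi : 1 ≤ i) (hij : i < j)
    (hj : j ≤ n) :
    Rtriple i j (n + 1) ⊆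
      (Subgroup.normalClosure
        (RV n ∪ (⋃ l ∈ Finset.range n, (Smap l) '' (RV n)) ∪ CR (n + 1)) : Set FG) := by
  have hS := Subgroup.subset_normalClosure
    (s := RV n ∪ (⋃ l ∈ Finset.range n, (Smap l) '' (RV n)) ∪ CR (n + 1))
  have hCR : CR (n + 1) ⊆ _ := fun w hw => hS (Or.inr hw)
  have hLong : LongR n ⊆ _ := fun w hw => hS (Or.inl (Or.inl (Or.inr hw)))
  have hImg : ∀ t < n, Smap t '' LongR n ⊆ _ := fun t ht w ⟨v, hv, hw⟩ =>
    hS (Or.inl (Or.inr (Set.mem_iUnion₂.2 ⟨t, Finset.mem_range.2 ht, v, Or.inr hv, hw⟩)))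
  rcases hj.lt_or_eq with hjn | rfl
  · exact Rtriple_succ_subset_of_lt hCR hLong hImg hi hij hjn
  rcases lt_or_ge (i + 1) j with hij' | hij'
  · exact Rtriple_self_succ_subset hCR hLong hImg hi hij'
  · obtain rfl : i = j - 1 := by omega
    exact Rtriple_pred_self_succ_subset hCR hLong hImg (by omega)
end
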